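/- arXiv:2501.08058 — 2 statements merged into one kernel-verified Lean document; each statement's English description precedes it below -/
import Mathlib

section
/- Let k_a > 0, k_b > 0 and set Z = (−k_a, k_b). Let ξ : [0, ∞) → ℝ be continuous with ξ(0) ∈ Z, and let U : Z → ℝ be continuous and nonnegative with U(e) → +∞ as e → −k_a from the right and as e → k_b from the left. Suppose there is a constant c such that for every t ≥ 0, if ξ(s) ∈ Z for all s ∈ [0, t], then U(ξ(t)) ≤ c. Then ξ(t) ∈ Z for all t ≥ 0. -/
/-! If the trajectory ever left `Z`, consider the first exit time `T > 0`. On `[0, T)` the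
trajectory stays in `Z`, so `U ∘ ξ ≤ c` there; but `ξ t` approaches the boundary point `ξ T`
from inside `Z` as `t → T⁻`, where the barrier `U` tends to `+∞`. -/

open Set Filter Topology

theorem exists_first_exit_time {X : Type*} [TopologicalSpace X] {Z : Set X} (hZ : IsOpen Z)
    {ξ : ℝ → X} (hξ : ContinuousOn ξ (Ici 0)) (hξ0 : ξ 0 ∈ Z) {t₀ : ℝ} (ht₀ : 0 ≤ t₀)
    (hexit : ξ t₀ ∉ Z) : ∃ T > 0, ξ T ∉ Z ∧ ∀ s ∈ Ico 0 T, ξ s ∈ Z := by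
  set S : Set ℝ := Ici 0 ∩ ξ ⁻¹' Zᶜ
  have hS_closed : IsClosed S := hξ.preimage_isClosed_of_isClosed isClosed_Ici hZ.isClosed_compl
  have hS_bdd : BddBelow S := ⟨0, fun _ hs => hs.1⟩
  have hT : sInf S ∈ S := hS_closed.csInf_mem ⟨t₀, ht₀, hexit⟩ hS_bdd
  refine ⟨sInf S, hT.1.lt_of_ne fun h => hT.2 (h ▸ hξ0), hT.2, fun s hs => ?_⟩
  by_contra hout
  exact (csInf_le hS_bdd ⟨hs.1, hout⟩).not_gt hs.2

theorem tendsto_comp_atTop_of_tendsto_frontier {α X : Type*} [TopologicalSpace X] {Z : Set X}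
    {U : X → ℝ} (hU : ∀ x ∈ closure Z \ Z, Tendsto U (𝓝[Z] x) atTop)
    {l : Filter α} [l.NeBot] {f : α → X} {x : X} (hf : Tendsto f l (𝓝 x))
    (hfZ : ∀ᶠ t in l, f t ∈ Z) (hx : x ∉ Z) : Tendsto (U ∘ f) l atTop :=
  (hU x ⟨mem_closure_of_tendsto hf hfZ, hx⟩).comp (tendsto_nhdsWithin_iff.mpr ⟨hf, hfZ⟩)

theorem tendsto_atTop_nhdsWithin_Ioo_of_boundary {U : ℝ → ℝ} {a b : ℝ}
    (hleft : Tendsto U (𝓝[>] a) atTop) (hright : Tendsto U (𝓝[<] b) atTop) :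
    ∀ x ∈ closure (Ioo a b) \ Ioo a b, Tendsto U (𝓝[Ioo a b] x) atTop := by
  rintro x ⟨hx_cl, hx_out⟩
  have hx_Icc : x ∈ Icc a b := closure_minimal Ioo_subset_Icc_self isClosed_Icc hx_cl
  rcases eq_endpoints_or_mem_Ioo_of_mem_Icc hx_Icc with rfl | rfl | hx_in
  · exact hleft.mono_left (nhdsWithin_mono _ Ioo_subset_Ioi_self)
  · exact hright.mono_left (nhdsWithin_mono _ Ioo_subset_Iio_self)
  · exact absurd hx_in hx_out

theorem blf_invariance_general
    (ka kb : ℝ)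
    (ξ : ℝ → ℝ) (hξcont : ContinuousOn ξ (Set.Ici 0))
    (hξ0 : ξ 0 ∈ Set.Ioo (-ka) kb)
    (U : ℝ → ℝ)
    (hUtop_left : Filter.Tendsto U (nhdsWithin (-ka) (Set.Ioi (-ka))) Filter.atTop)
    (hUtop_right : Filter.Tendsto U (nhdsWithin kb (Set.Iio kb)) Filter.atTop)
    (c : ℝ)
    (hbound : ∀ t ≥ (0 : ℝ), (∀ s ∈ Set.Icc 0 t, ξ s ∈ Set.Ioo (-ka) kb) → U (ξ t) ≤ c) :
    ∀ t ≥ (0 : ℝ), ξ t ∈ Set.Ioo (-ka) kb := by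
  intro t₀ ht₀
  by_contra hexit
  obtain ⟨T, hT, hT_out, hT_in⟩ := exists_first_exit_time isOpen_Ioo hξcont hξ0 ht₀ hexit
  have h_before : Ico 0 T ∈ 𝓝[<] T := Ico_mem_nhdsLT hT
  have hξ_lim : Tendsto ξ (𝓝[<] T) (𝓝 (ξ T)) :=
    (hξcont T hT.le).mono_of_mem_nhdsWithin (mem_of_superset h_before Ico_subset_Ici_self)
  have hU_top : Tendsto (U ∘ ξ) (𝓝[<] T) atTop :=
    tendsto_comp_atTop_of_tendsto_frontier
      (tendsto_atTop_nhdsWithin_Ioo_of_boundary hUtop_left hUtop_right) hξ_lim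
      (mem_of_superset h_before hT_in) hT_out
  have hU_le : ∀ᶠ t in 𝓝[<] T, U (ξ t) ≤ c :=
    mem_of_superset h_before fun s hs =>
      hbound s hs.1 fun r hr => hT_in r ⟨hr.1, hr.2.trans_lt hs.2⟩
  obtain ⟨t, hgt, hle⟩ := ((hU_top.eventually_gt_atTop c).and hU_le).exists
  exact hgt.not_ge hle

/-- (Trajectory-wise barrier Lyapunov invariance lemma.)
Let k_a, k_b > 0 and Z = (−k_a, k_b). If ξ : [0,∞) → ℝ is continuous with ξ(0) ∈ Z,
U is continuous and nonnegative on Z and blows up at both endpoints of Z, and there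
is a constant c such that U(ξ(t)) ≤ c whenever ξ stays in Z on [0, t], then
ξ(t) ∈ Z for all t ≥ 0. -/
theorem blf_invariance
    (ka kb : ℝ) (hka : 0 < ka) (hkb : 0 < kb)
    (ξ : ℝ → ℝ) (hξcont : ContinuousOn ξ (Set.Ici 0))
    (hξ0 : ξ 0 ∈ Set.Ioo (-ka) kb)
    (U : ℝ → ℝ) (hUcont : ContinuousOn U (Set.Ioo (-ka) kb))
    (hUnonneg : ∀ e ∈ Set.Ioo (-ka) kb, 0 ≤ U e)
    (hUtop_left : Filter.Tendsto U (nhdsWithin (-ka) (Set.Ioi (-ka))) Filter.atTop)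
    (hUtop_right : Filter.Tendsto U (nhdsWithin kb (Set.Iio kb)) Filter.atTop)
    (c : ℝ)
    (hbound : ∀ t ≥ (0 : ℝ), (∀ s ∈ Set.Icc 0 t, ξ s ∈ Set.Ioo (-ka) kb) → U (ξ t) ≤ c) :
    ∀ t ≥ (0 : ℝ), ξ t ∈ Set.Ioo (-ka) kb :=
  blf_invariance_general ka kb ξ hξcont hξ0 U hUtop_left hUtop_right c hbound
end

section
/- Fix t ≥ 0 with r(t) ∈ (r_i, r_o), and suppose x, y, θ are differentiable at t with ẋ(t) = v·cos θ(t), ẏ(t) = v·sin θ(t) and θ̇(t) = ω(t), where ω(t) = v/d + v·k₁·Ω(v·ē_x(t)) + v·k₂·((r(t) − d)/r(t))·η(r(t) − d). Then the function t ↦ V₁(t) = (1/2)(ē_x(t)² + ē_y(t)²) + d·k₂·V_r(r(t) − d) is differentiable at t with derivative −d·k₁·(v·ē_x(t))·Ω(v·ē_x(t)); in particular this derivative is ≤ 0. -/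
/-!
In the frame attached to the vehicle, the errors rotate with the heading, so
`d/dt ē_x = v + (ē_y - d) ω` and `d/dt ē_y = -ē_x ω`; hence the kinetic part of `V₁`
changes at rate `ē_x (v - d ω)`.  The range changes at rate `v ē_x / r`, and the barrier
satisfies `V_r'(e) = e η(e)`, so its contribution `d k₂ (r - d) η v ē_x / r` is exactly
cancelled by the range term of the controller `ω`, leaving `-d k₁ (v ē_x) Ω(v ē_x)`.
-/

/-- Range r(t) = √((x(t) − x_T)² + (y(t) − y_T)²). -/
noncomputable def rng (x y : ℝ → ℝ) (xT yT : ℝ) (t : ℝ) : ℝ :=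
  Real.sqrt ((x t - xT) ^ 2 + (y t - yT) ^ 2)

/-- Transformed error ē_x(t) = (x(t) − x_T)·cos θ(t) + (y(t) − y_T)·sin θ(t). -/
noncomputable def ebx (x y θ : ℝ → ℝ) (xT yT : ℝ) (t : ℝ) : ℝ :=
  (x t - xT) * Real.cos (θ t) + (y t - yT) * Real.sin (θ t)

/-- Transformed error ē_y(t) = −(x(t) − x_T)·sin θ(t) + (y(t) − y_T)·cos θ(t) + d. -/
noncomputable def eby (x y θ : ℝ → ℝ) (xT yT d : ℝ) (t : ℝ) : ℝ :=
  -(x t - xT) * Real.sin (θ t) + (y t - yT) * Real.cos (θ t) + d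

/-- The asymmetric barrier Lyapunov function V_r. -/
noncomputable def Vr (δa δb e : ℝ) : ℝ :=
  if 0 < e then (1 / 2) * Real.log (δb ^ 2 / (δb ^ 2 - e ^ 2))
  else (1 / 2) * Real.log (δa ^ 2 / (δa ^ 2 - e ^ 2))

/-- η(e) = 1/(δ_b² − e²) for e > 0 and η(e) = 1/(δ_a² − e²) for e ≤ 0. -/
noncomputable def eta (δa δb e : ℝ) : ℝ :=
  if 0 < e then 1 / (δb ^ 2 - e ^ 2) else 1 / (δa ^ 2 - e ^ 2)

open Real Set Filter Topology

theorem HasDerivAt.ite_pos {f g : ℝ → ℝ} {f' e : ℝ} (hf : 0 ≤ e → HasDerivAt f f' e)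
    (hg : e ≤ 0 → HasDerivAt g f' e) (h0 : f 0 = g 0) :
    HasDerivAt (fun x => if 0 < x then f x else g x) f' e := by
  rcases lt_trichotomy e 0 with he | rfl | he
  · refine (hg he.le).congr_of_eventuallyEq ?_
    filter_upwards [Iio_mem_nhds he] with x hx
    exact if_neg (not_lt.2 hx.le)
  · have hR : HasDerivWithinAt (fun x => if 0 < x then f x else g x) f' (Ici 0) 0 := by
      refine (hf le_rfl).hasDerivWithinAt.congr_of_mem (fun x hx => ?_) self_mem_Ici
      rcases (mem_Ici.1 hx).eq_or_lt with rfl | hx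
      · simp [h0]
      · exact if_pos hx
    have hL : HasDerivWithinAt (fun x => if 0 < x then f x else g x) f' (Iic 0) 0 :=
      (hg le_rfl).hasDerivWithinAt.congr_of_mem
        (fun x hx => if_neg (not_lt.2 (mem_Iic.1 hx))) self_mem_Iic
    simpa [Iic_union_Ici] using hL.union hR
  · refine (hf he.le).congr_of_eventuallyEq ?_
    filter_upwards [Ioi_mem_nhds he] with x hx
    exact if_pos hx

theorem hasDerivAt_half_log_barrier {δ e : ℝ} (he : e ^ 2 < δ ^ 2) :
    HasDerivAt (fun s => 1 / 2 * log (δ ^ 2 / (δ ^ 2 - s ^ 2))) (e / (δ ^ 2 - e ^ 2)) e := by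
  have hgap : δ ^ 2 - e ^ 2 ≠ 0 := (sub_pos.2 he).ne'
  have hδ : δ ≠ 0 := by rintro rfl; nlinarith [sq_nonneg e]
  have hq := (hasDerivAt_const e (δ ^ 2)).fun_div ((hasDerivAt_pow 2 e).const_sub (δ ^ 2)) hgap
  refine ((hq.log (div_ne_zero (pow_ne_zero 2 hδ) hgap)).const_mul (1 / 2 : ℝ)).congr_deriv ?_
  field_simp
  ring

theorem hasDerivAt_Vr {δa δb e : ℝ} (ha : -δa < e) (hb : e < δb) :
    HasDerivAt (Vr δa δb) (e * eta δa δb e) e := by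
  refine HasDerivAt.ite_pos (fun he => ?_) (fun he => ?_) (by simp)
  · refine (hasDerivAt_half_log_barrier (by nlinarith)).congr_deriv ?_
    rcases he.eq_or_lt with rfl | he
    · simp
    · simp [eta, he, div_eq_mul_inv]
  · refine (hasDerivAt_half_log_barrier (by nlinarith)).congr_deriv ?_
    simp [eta, not_lt.2 he, div_eq_mul_inv]

-- `eby x y θ xT yT 0` is `ē_y - d`.
theorem hasDerivAt_ebx {x y θ : ℝ → ℝ} {x' y' ω xT yT t : ℝ} (hx : HasDerivAt x x' t)
    (hy : HasDerivAt y y' t) (hθ : HasDerivAt θ ω t) :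
    HasDerivAt (ebx x y θ xT yT)
      (x' * cos (θ t) + y' * sin (θ t) + eby x y θ xT yT 0 t * ω) t :=
  (((hx.sub_const xT).mul hθ.cos).add ((hy.sub_const yT).mul hθ.sin)).congr_deriv
    (by simp only [eby]; ring)

theorem hasDerivAt_eby {x y θ : ℝ → ℝ} {x' y' ω xT yT d t : ℝ} (hx : HasDerivAt x x' t)
    (hy : HasDerivAt y y' t) (hθ : HasDerivAt θ ω t) :
    HasDerivAt (eby x y θ xT yT d)
      (-x' * sin (θ t) + y' * cos (θ t) - ebx x y θ xT yT t * ω) t :=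
  ((((hx.sub_const xT).neg.mul hθ.sin).add ((hy.sub_const yT).mul hθ.cos)).add_const d).congr_deriv
    (by simp only [ebx, Pi.neg_apply]; ring)

theorem hasDerivAt_rng {x y : ℝ → ℝ} {x' y' xT yT t : ℝ} (hx : HasDerivAt x x' t)
    (hy : HasDerivAt y y' t) (hr : rng x y xT yT t ≠ 0) :
    HasDerivAt (rng x y xT yT) (((x t - xT) * x' + (y t - yT) * y') / rng x y xT yT t) t := by
  have hsq : (x t - xT) ^ 2 + (y t - yT) ^ 2 ≠ 0 := fun h => hr (by simp [rng, h])
  refine ((((hx.sub_const xT).pow 2).add ((hy.sub_const yT).pow 2)).sqrt hsq).congr_deriv ?_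
  simp only [rng, Pi.add_apply, Pi.pow_apply]
  field_simp
  ring

theorem hasDerivAt_frame_energy {x y θ : ℝ → ℝ} {v ω xT yT d t : ℝ}
    (hx : HasDerivAt x (v * cos (θ t)) t) (hy : HasDerivAt y (v * sin (θ t)) t)
    (hθ : HasDerivAt θ ω t) :
    HasDerivAt (fun s => 1 / 2 * (ebx x y θ xT yT s ^ 2 + eby x y θ xT yT d s ^ 2))
      (ebx x y θ xT yT t * (v - d * ω)) t := by
  refine ((((hasDerivAt_ebx hx hy hθ).pow 2).add
    ((hasDerivAt_eby (d := d) hx hy hθ).pow 2)).const_mul (1 / 2)).congr_deriv ?_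
  simp only [ebx, eby]
  linear_combination
    v * ((x t - xT) * cos (θ t) + (y t - yT) * sin (θ t)) * cos_sq_add_sin_sq (θ t)

theorem V1_derivative_general
    (x y θ : ℝ → ℝ) (Ω : ℝ → ℝ) (v d k1 k2 ri ro xT yT t : ℝ)
    (hΩpos : ∀ s : ℝ, s ≠ 0 → 0 < s * Ω s)
    (hri : 0 < ri) (hrid : ri < d)
    (hk1 : 0 < k1)
    (hr : rng x y xT yT t ∈ Set.Ioo ri ro)
    (hx : HasDerivAt x (v * Real.cos (θ t)) t)
    (hy : HasDerivAt y (v * Real.sin (θ t)) t)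
    (hθ : HasDerivAt θ (v / d + v * k1 * Ω (v * ebx x y θ xT yT t) +
      v * k2 * ((rng x y xT yT t - d) / rng x y xT yT t) *
        eta (d - ri) (ro - d) (rng x y xT yT t - d)) t) :
    HasDerivAt
      (fun s => (1 / 2) * ((ebx x y θ xT yT s) ^ 2 + (eby x y θ xT yT d s) ^ 2) +
        d * k2 * Vr (d - ri) (ro - d) (rng x y xT yT s - d))
      (-(d * k1 * (v * ebx x y θ xT yT t) * Ω (v * ebx x y θ xT yT t))) t ∧
    -(d * k1 * (v * ebx x y θ xT yT t) * Ω (v * ebx x y θ xT yT t)) ≤ 0 := by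
  have hd : d ≠ 0 := (hri.trans hrid).ne'
  have hr0 : rng x y xT yT t ≠ 0 := (hri.trans hr.1).ne'
  have hrng : HasDerivAt (rng x y xT yT) (v * ebx x y θ xT yT t / rng x y xT yT t) t :=
    (hasDerivAt_rng hx hy hr0).congr_deriv (by rw [ebx]; ring)
  have hbarrier := (hasDerivAt_Vr (δa := d - ri) (δb := ro - d) (e := rng x y xT yT t - d)
    (by linarith [hr.1]) (by linarith [hr.2])).comp t (hrng.sub_const d)
  refine ⟨((hasDerivAt_frame_energy hx hy hθ).add
    (hbarrier.const_mul (d * k2))).congr_deriv ?_, ?_⟩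
  · field_simp
    ring
  · have hsΩ : 0 ≤ v * ebx x y θ xT yT t * Ω (v * ebx x y θ xT yT t) := by
      rcases eq_or_ne (v * ebx x y θ xT yT t) 0 with h | h
      · simp [h]
      · exact (hΩpos _ h).le
    rw [neg_nonpos, mul_assoc]
    exact mul_nonneg (mul_pos (hri.trans hrid) hk1).le hsΩ

/-- Along the closed-loop dynamics with the range and range-rate based
controller, the joint Lyapunov function
V₁(t) = (1/2)(ē_x(t)² + ē_y(t)²) + d·k₂·V_r(r(t) − d)
is differentiable at t with derivative −d·k₁·(v·ē_x(t))·Ω(v·ē_x(t)) ≤ 0. -/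
theorem V1_derivative
    (x y θ : ℝ → ℝ) (Ω : ℝ → ℝ) (v d k1 k2 ri ro xT yT t : ℝ)
    (hΩcont : Continuous Ω) (hΩ0 : Ω 0 = 0) (hΩpos : ∀ s : ℝ, s ≠ 0 → 0 < s * Ω s)
    (hv : v ≠ 0) (hri : 0 < ri) (hrid : ri < d) (hdro : d < ro)
    (hk1 : 0 < k1) (hk2 : 0 < k2) (ht : 0 ≤ t)
    (hr : rng x y xT yT t ∈ Set.Ioo ri ro)
    (hx : HasDerivAt x (v * Real.cos (θ t)) t)
    (hy : HasDerivAt y (v * Real.sin (θ t)) t)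
    (hθ : HasDerivAt θ (v / d + v * k1 * Ω (v * ebx x y θ xT yT t) +
      v * k2 * ((rng x y xT yT t - d) / rng x y xT yT t) *
        eta (d - ri) (ro - d) (rng x y xT yT t - d)) t) :
    HasDerivAt
      (fun s => (1 / 2) * ((ebx x y θ xT yT s) ^ 2 + (eby x y θ xT yT d s) ^ 2) +
        d * k2 * Vr (d - ri) (ro - d) (rng x y xT yT s - d))
      (-(d * k1 * (v * ebx x y θ xT yT t) * Ω (v * ebx x y θ xT yT t))) t ∧
    -(d * k1 * (v * ebx x y θ xT yT t) * Ω (v * ebx x y θ xT yT t)) ≤ 0 :=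
  V1_derivative_general x y θ Ω v d k1 k2 ri ro xT yT t hΩpos hri hrid hk1 hr hx hy hθ
end
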